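/- arXiv:0709.0252 — 2 statements merged into one kernel-verified Lean document; each statement's English description precedes it below -/
import Mathlib

section
/- Let B_n(x) be the Bell polynomials, defined by B_0(x) = 1 and B_{n+1}(x) = x·(B_n'(x) + B_n(x)) for n ≥ 0. Then for all real numbers x and t, the series ∑_{n=0}^∞ B_n(x)·t^n/n! converges and its sum equals exp(x·(e^t − 1)). -/
/-!
Expanding `exp (x eᵗ) = ∑ₖ xᵏ/k! · e^{kt} = ∑ₖ ∑ₙ xᵏ/k! · (kt)ⁿ/n!`, an absolutely convergent
double series, and summing over `k` first reduces the theorem to Dobinski's formula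
`Bₙ(x) eˣ = ∑ₖ kⁿ xᵏ/k!`.

For Dobinski's formula, let `L_k = evalDescPochhammer k` be the linear functional sending `Xʲ`
to the falling factorial `k^{(j)} = k (k-1) ⋯ (k-j+1)`. From `k · k^{(j)} = k^{(j+1)} + j · k^{(j)}`
one gets `L_k (X (p' + p)) = k · L_k p`, hence `L_k Bₙ = kⁿ`; and `∑ₖ L_k(p) xᵏ/k! = p(x) eˣ` for
every polynomial `p`, since on `Xʲ` it is the exponential series multiplied by `xʲ`.
-/

/-- The Bell polynomials, defined by `B₀ = 1` and `B_{n+1} = X * (Bₙ' + Bₙ)`. -/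
noncomputable def Bell : ℕ → Polynomial ℝ
  | 0 => 1
  | n + 1 => Polynomial.X * (Polynomial.derivative (Bell n) + Bell n)

open Polynomial Nat

section evalDescPochhammer

variable {R : Type*} [CommRing R]

noncomputable def evalDescPochhammer (k : R) (p : R[X]) : R :=
  p.sum fun j a => a * (descPochhammer R j).eval k

lemma evalDescPochhammer_add (k : R) (p q : R[X]) :
    evalDescPochhammer k (p + q) = evalDescPochhammer k p + evalDescPochhammer k q :=
  sum_add_index _ _ _ (fun _ => zero_mul _) fun _ _ _ => add_mul _ _ _

lemma evalDescPochhammer_monomial (k : R) (j : ℕ) (a : R) :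
    evalDescPochhammer k (monomial j a) = a * (descPochhammer R j).eval k :=
  sum_monomial_index _ _ (zero_mul _)

lemma X_mul_derivative_monomial_add (j : ℕ) (a : R) :
    X * (derivative (monomial j a) + monomial j a) = monomial j (a * j) + monomial (j + 1) a := by
  rw [mul_add, X_mul_monomial, derivative_monomial]
  cases j with
  | zero => simp
  | succ j => rw [Nat.add_sub_cancel, X_mul_monomial]

lemma evalDescPochhammer_X_mul_derivative_add (k : R) (p : R[X]) :
    evalDescPochhammer k (X * (derivative p + p)) = k * evalDescPochhammer k p := by
  induction p using Polynomial.induction_on' with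
  | add p q hp hq =>
    rw [derivative_add, add_add_add_comm, mul_add, evalDescPochhammer_add, evalDescPochhammer_add,
      hp, hq, mul_add]
  | monomial j a =>
    rw [X_mul_derivative_monomial_add, evalDescPochhammer_add, evalDescPochhammer_monomial,
      evalDescPochhammer_monomial, evalDescPochhammer_monomial, descPochhammer_succ_eval]
    ring

end evalDescPochhammer

lemma evalDescPochhammer_bell (k : ℝ) (n : ℕ) : evalDescPochhammer k (Bell n) = k ^ n := by
  induction n with
  | zero => simpa [Bell] using evalDescPochhammer_monomial k 0 1
  | succ n ih => rw [Bell, evalDescPochhammer_X_mul_derivative_add, ih, _root_.pow_succ']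

lemma hasSum_pow_div_factorial (x : ℝ) : HasSum (fun n => x ^ n / n !) (Real.exp x) := by
  rw [Real.exp_eq_exp_ℝ]
  exact NormedSpace.expSeries_div_hasSum_exp x

lemma hasSum_descFactorial_mul_pow_div_factorial (j : ℕ) (x : ℝ) :
    HasSum (fun k => k.descFactorial j * x ^ k / k !) (x ^ j * Real.exp x) := by
  have vanish : ∑ k ∈ Finset.range j, (k.descFactorial j : ℝ) * x ^ k / k ! = 0 :=
    Finset.sum_eq_zero fun k hk => by
      simp [descFactorial_eq_zero_iff_lt.2 (Finset.mem_range.1 hk)]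
  rw [← hasSum_nat_add_iff' j, vanish, sub_zero]
  refine ((hasSum_pow_div_factorial x).mul_left (x ^ j)).congr_fun fun m => ?_
  have hfact := factorial_mul_descFactorial (Nat.le_add_left j m)
  rw [Nat.add_sub_cancel] at hfact
  rw [← hfact, pow_add]
  push_cast
  field_simp

lemma hasSum_evalDescPochhammer_mul_pow_div_factorial (p : ℝ[X]) (x : ℝ) :
    HasSum (fun k : ℕ => evalDescPochhammer (k : ℝ) p * x ^ k / k !) (p.eval x * Real.exp x) := by
  induction p using Polynomial.induction_on' with
  | add p q hp hq =>
    simpa only [evalDescPochhammer_add, eval_add, add_mul, add_div] using hp.add hq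
  | monomial j a =>
    simpa only [evalDescPochhammer_monomial, descPochhammer_eval_eq_descFactorial, eval_monomial,
      mul_assoc, mul_div_assoc] using (hasSum_descFactorial_mul_pow_div_factorial j x).mul_left a

theorem bell_dobinski (n : ℕ) (x : ℝ) :
    HasSum (fun k : ℕ => (k : ℝ) ^ n * x ^ k / k !) ((Bell n).eval x * Real.exp x) := by
  simpa only [evalDescPochhammer_bell] using
    hasSum_evalDescPochhammer_mul_pow_div_factorial (Bell n) x

noncomputable def expMulExpTerm (x t : ℝ) (p : ℕ × ℕ) : ℝ :=
  x ^ p.1 / p.1 ! * ((p.1 * t) ^ p.2 / p.2 !)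

lemma hasSum_expMulExpTerm_fiber (x t : ℝ) (k : ℕ) :
    HasSum (fun n => expMulExpTerm x t (k, n)) ((x * Real.exp t) ^ k / k !) := by
  have hsum : (x * Real.exp t) ^ k / k ! = x ^ k / k ! * Real.exp (k * t) := by
    rw [mul_pow, ← Real.exp_nat_mul]
    ring
  rw [hsum]
  exact (hasSum_pow_div_factorial (k * t)).mul_left (x ^ k / k !)

lemma summable_expMulExpTerm (x t : ℝ) : Summable (expMulExpTerm x t) := by
  have abs_summable : Summable (expMulExpTerm |x| |t|) :=
    (summable_prod_of_nonneg fun p => by unfold expMulExpTerm; positivity).2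
      ⟨fun k => (hasSum_expMulExpTerm_fiber |x| |t| k).summable, by
        simpa only [(hasSum_expMulExpTerm_fiber |x| |t| _).tsum_eq]
          using (hasSum_pow_div_factorial _).summable⟩
  refine Summable.of_norm (abs_summable.congr fun p => ?_)
  simp [expMulExpTerm]

lemma hasSum_expMulExpTerm (x t : ℝ) :
    HasSum (expMulExpTerm x t) (Real.exp (x * Real.exp t)) := by
  have hsum := (summable_expMulExpTerm x t).hasSum
  rwa [(hasSum_pow_div_factorial _).unique
    (hsum.prod_fiberwise (hasSum_expMulExpTerm_fiber x t))]

lemma hasSum_pow_div_factorial_mul_bell_eval_mul_exp (x t : ℝ) :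
    HasSum (fun n => t ^ n / n ! * ((Bell n).eval x * Real.exp x)) (Real.exp (x * Real.exp t)) :=
  ((Equiv.prodComm ℕ ℕ).hasSum_iff.2 (hasSum_expMulExpTerm x t)).prod_fiberwise fun n =>
    ((bell_dobinski n x).mul_left (t ^ n / n !)).congr_fun fun k => by
      simp only [Function.comp_apply, Equiv.prodComm_apply, Prod.swap_prod_mk, expMulExpTerm,
        mul_pow]
      ring

/-- For all real `x` and `t`, the series `∑ Bₙ(x) tⁿ/n!` converges with sum
`exp (x (eᵗ - 1))`. -/
theorem bell_generating_function (x t : ℝ) :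
    HasSum (fun n : ℕ => (Bell n).eval x * t ^ n / (n.factorial : ℝ))
      (Real.exp (x * (Real.exp t - 1))) := by
  have hdiv := (hasSum_pow_div_factorial_mul_bell_eval_mul_exp x t).div_const (Real.exp x)
  rw [← Real.exp_sub, show x * Real.exp t - x = x * (Real.exp t - 1) by ring] at hdiv
  exact hdiv.congr_fun fun n => by field_simp
end

section
/- For u, v > 0, define ψ(u,v) = v/LW₀(v/u) + v·ln(v/LW₀(v/u)) − (u + v). Then for all u, v > 0, the partial derivatives of ψ exist and satisfy ∂ψ/∂u(u,v) = v/(u·LW₀(v/u)) − 1 and ∂ψ/∂v(u,v) = ln(v/LW₀(v/u)); consequently ψ solves the eikonal equation exp(∂ψ/∂v) = u·(∂ψ/∂u + 1) on (0,∞)². -/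
/-!
Write `W = LW₀(v/u)`. The relation `u W e^W = v` gives `v/W = u e^W` and `ln(v/W) = ln u + W`,
so `ψ(u,v) = Φ(u,v,W)` for `Φ(u,v,s) = u eˢ(1 - s) + v s + v ln u - u` (`psiLift`).
Since `∂Φ/∂s = v - u s eˢ` vanishes at `s = W`, the derivative of `LW₀` drops out of the chain
rule (envelope principle): the partials of `ψ` are those of `Φ` at `s = W`, and of `LW₀` only
its differentiability, from the inverse function theorem, is needed.
-/

/-- The principal branch of the Lambert W function on the nonnegative reals:
for `z ≥ 0`, `LW0 z` is the unique `w ≥ 0` with `w·exp w = z`. -/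
noncomputable def LW0 (z : ℝ) : ℝ :=
  Function.invFunOn (fun w => w * Real.exp w) (Set.Ici 0) z

/-- The phase function `ψ(u,v) = v/LW₀(v/u) + v·ln(v/LW₀(v/u)) − (u + v)`. -/
noncomputable def psi (u v : ℝ) : ℝ :=
  v / LW0 (v / u) + v * Real.log (v / LW0 (v / u)) - (u + v)

open Real Set

lemma strictMonoOn_mul_exp : StrictMonoOn (fun w : ℝ => w * exp w) (Ici 0) := by
  intro a ha b _ hab
  have : exp a < exp b := exp_lt_exp.2 hab
  dsimp only
  nlinarith [exp_pos a, mem_Ici.1 ha]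

lemma exists_mul_exp_eq {z : ℝ} (hz : 0 ≤ z) : ∃ w ∈ Ici (0 : ℝ), w * exp w = z := by
  have hcont : ContinuousOn (fun w : ℝ => w * exp w) (Icc 0 z) := by fun_prop
  have hz_le : z ≤ z * exp z := le_mul_of_one_le_right hz (one_le_exp hz)
  obtain ⟨w, hw, hwz⟩ := intermediate_value_Icc hz hcont ⟨by simpa using hz, hz_le⟩
  exact ⟨w, hw.1, hwz⟩

lemma LW0_nonneg {z : ℝ} (hz : 0 ≤ z) : 0 ≤ LW0 z :=
  Function.invFunOn_mem (exists_mul_exp_eq hz)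

lemma LW0_mul_exp_LW0 {z : ℝ} (hz : 0 ≤ z) : LW0 z * exp (LW0 z) = z :=
  Function.invFunOn_eq (exists_mul_exp_eq hz)

lemma LW0_mul_exp {w : ℝ} (hw : 0 ≤ w) : LW0 (w * exp w) = w :=
  strictMonoOn_mul_exp.injOn (LW0_nonneg (by positivity)) hw (LW0_mul_exp_LW0 (by positivity))

lemma LW0_pos {z : ℝ} (hz : 0 < z) : 0 < LW0 z := by
  refine (LW0_nonneg hz.le).lt_of_ne fun h => hz.ne ?_
  rw [← LW0_mul_exp_LW0 hz.le, ← h, zero_mul]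

lemma monotoneOn_LW0 : MonotoneOn LW0 (Ici 0) := by
  intro a ha b hb hab
  by_contra! h
  have := strictMonoOn_mul_exp (LW0_nonneg hb) (LW0_nonneg ha) h
  simp only [LW0_mul_exp_LW0 ha, LW0_mul_exp_LW0 hb] at this
  exact hab.not_gt this

lemma continuousAt_LW0 {z : ℝ} (hz : 0 < z) : ContinuousAt LW0 z := by
  refine continuousAt_of_monotoneOn_of_image_mem_nhds monotoneOn_LW0 (Ici_mem_nhds hz) ?_
  have hsurj : Ici (0 : ℝ) ⊆ LW0 '' Ici 0 := fun w hw =>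
    ⟨w * exp w, mem_Ici.2 (mul_nonneg hw (exp_pos w).le), LW0_mul_exp hw⟩
  exact Filter.mem_of_superset (Ioi_mem_nhds (LW0_pos hz)) (Ioi_subset_Ici_self.trans hsurj)

lemma hasDerivAt_LW0 {z : ℝ} (hz : 0 < z) :
    HasDerivAt LW0 ((1 + LW0 z) * exp (LW0 z))⁻¹ z := by
  have hderiv : HasDerivAt (fun w : ℝ => w * exp w) ((1 + LW0 z) * exp (LW0 z)) (LW0 z) :=
    ((hasDerivAt_id' _).mul (hasDerivAt_exp _)).congr_deriv (by ring)
  refine HasDerivAt.of_local_left_inverse (continuousAt_LW0 hz) hderiv ?_ ?_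
  · have := LW0_nonneg hz.le
    positivity
  · filter_upwards [Ioi_mem_nhds hz] with y hy using LW0_mul_exp_LW0 hy.le

noncomputable def psiLift (u v s : ℝ) : ℝ :=
  u * exp s * (1 - s) + v * s + v * log u - u

lemma hasDerivAt_psiLift_of_critical {u v s : ℝ → ℝ} {u' v' s' t : ℝ}
    (hu : HasDerivAt u u' t) (hv : HasDerivAt v v' t) (hs : HasDerivAt s s' t)
    (hu0 : u t ≠ 0) (hcrit : u t * (s t * exp (s t)) = v t) :
    HasDerivAt (fun t => psiLift (u t) (v t) (s t))
      (u' * (exp (s t) - 1) + v' * (s t + log (u t))) t := by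
  have h := (((hu.mul hs.exp).mul (hs.const_sub 1)).add (hv.mul hs)).add
    (hv.mul (hu.log hu0)) |>.sub hu
  refine h.congr_deriv ?_
  simp only [Pi.mul_apply]
  field_simp
  linear_combination (-(s' * u t) - u') * hcrit

section psi

variable {u v : ℝ}

lemma mul_LW0_div_mul_exp (hu : 0 < u) (hv : 0 ≤ v) :
    u * (LW0 (v / u) * exp (LW0 (v / u))) = v := by
  rw [LW0_mul_exp_LW0 (by positivity), mul_div_cancel₀ v hu.ne']

lemma div_LW0_div (hu : 0 < u) (hv : 0 < v) : v / LW0 (v / u) = u * exp (LW0 (v / u)) := by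
  have hW := LW0_pos (div_pos hv hu)
  rw [div_eq_iff hW.ne']
  linear_combination -(mul_LW0_div_mul_exp hu hv.le)

lemma log_div_LW0_div (hu : 0 < u) (hv : 0 < v) :
    log (v / LW0 (v / u)) = log u + LW0 (v / u) := by
  rw [div_LW0_div hu hv, log_mul hu.ne' (exp_pos _).ne', log_exp]

lemma psi_eq_psiLift (hu : 0 < u) (hv : 0 < v) : psi u v = psiLift u v (LW0 (v / u)) := by
  rw [psi, psiLift, log_div_LW0_div hu hv, div_LW0_div hu hv]
  linear_combination mul_LW0_div_mul_exp hu hv.le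

lemma hasDerivAt_psi_fst (hu : 0 < u) (hv : 0 < v) :
    HasDerivAt (fun u' => psi u' v) (exp (LW0 (v / u)) - 1) u := by
  have hs : HasDerivAt (fun u' => LW0 (v / u')) _ u :=
    (hasDerivAt_LW0 (div_pos hv hu)).comp u ((hasDerivAt_inv hu.ne').const_mul v)
  have h := hasDerivAt_psiLift_of_critical (hasDerivAt_id u) (hasDerivAt_const u v) hs hu.ne'
    (mul_LW0_div_mul_exp hu hv.le)
  refine (h.congr_of_eventuallyEq ?_).congr_deriv ?_
  · filter_upwards [Ioi_mem_nhds hu] with u' hu' using psi_eq_psiLift hu' hv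
  · ring

lemma hasDerivAt_psi_snd (hu : 0 < u) (hv : 0 < v) :
    HasDerivAt (fun v' => psi u v') (log u + LW0 (v / u)) v := by
  have hs : HasDerivAt (fun v' => LW0 (v' / u)) _ v :=
    (hasDerivAt_LW0 (div_pos hv hu)).comp v ((hasDerivAt_id v).div_const u)
  have h := hasDerivAt_psiLift_of_critical (hasDerivAt_const v u) (hasDerivAt_id v) hs hu.ne'
    (mul_LW0_div_mul_exp hu hv.le)
  refine (h.congr_of_eventuallyEq ?_).congr_deriv ?_
  · filter_upwards [Ioi_mem_nhds hv] with v' hv' using psi_eq_psiLift hu hv'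
  · ring

end psi

/-- The partial derivatives of `ψ` are `ψ_u = v/(u·LW₀(v/u)) − 1` and
`ψ_v = ln(v/LW₀(v/u))`, and `ψ` solves the eikonal equation `exp(ψ_v) = u·(ψ_u + 1)`. -/
theorem psi_partials_and_eikonal (u v : ℝ) (hu : 0 < u) (hv : 0 < v) :
    HasDerivAt (fun u' => psi u' v) (v / (u * LW0 (v / u)) - 1) u ∧
    HasDerivAt (fun v' => psi u v') (Real.log (v / LW0 (v / u))) v ∧
    Real.exp (Real.log (v / LW0 (v / u))) = u * ((v / (u * LW0 (v / u)) - 1) + 1) := by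
  have hdiv : v / (u * LW0 (v / u)) = exp (LW0 (v / u)) := by
    rw [div_mul_eq_div_div_swap, div_LW0_div hu hv, mul_div_cancel_left₀ _ hu.ne']
  rw [hdiv, log_div_LW0_div hu hv]
  refine ⟨hasDerivAt_psi_fst hu hv, hasDerivAt_psi_snd hu hv, ?_⟩
  rw [exp_add, exp_log hu]
  ring
end
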